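/- arXiv:1107.2718 — 5 statements merged into one kernel-verified Lean document; each statement's English description precedes it below -/
import Mathlib

section
/- If S is a finite nonempty set of positive indices containing no two consecutive integers and whose largest element is n, then Σ_{i∈S} F_i < F_{n+1}. -/
/-- `F n` is the Fibonacci number in the convention `F 1 = 1, F 2 = 2`,
`F (n+1) = F n + F (n-1)`, i.e. `F n = fib (n+1)`. -/
def F (n : ℕ) : ℕ := Nat.fib (n + 1)

open Finset Nat

-- `2 ≤ i` is needed because `fib 1 = fib 2`: `S = {1, 3}` gives `fib 1 + fib 3 = fib 4`.
theorem sum_fib_lt_fib_succ_of_no_consecutive {S : Finset ℕ} {n : ℕ}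
    (htwo : ∀ i ∈ S, 2 ≤ i) (hnc : ∀ i ∈ S, i + 1 ∉ S) (hle : ∀ i ∈ S, i ≤ n) :
    ∑ i ∈ S, fib i < fib (n + 1) := by
  induction S using Finset.induction_on_max generalizing n with
  | empty => simp [fib_pos]
  | insert a s hlt ih =>
    have ha : 2 ≤ a := htwo a (mem_insert_self a s)
    have hs : ∀ i ∈ s, i ≤ a - 2 := fun i hi => by
      have : i + 1 ≠ a := fun h => hnc i (mem_insert_of_mem hi) (h ▸ mem_insert_self a s)
      have := hlt i hi
      omega
    have hsum : ∑ i ∈ s, fib i < fib (a - 1) := by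
      have := ih (fun i hi => htwo i (mem_insert_of_mem hi))
        (fun i hi hi' => hnc i (mem_insert_of_mem hi) (mem_insert_of_mem hi')) hs
      rwa [show a - 2 + 1 = a - 1 by omega] at this
    calc ∑ i ∈ insert a s, fib i = fib a + ∑ i ∈ s, fib i :=
          sum_insert fun h => (hlt a h).false
      _ < fib (a - 1) + fib a := by omega
      _ = fib (a + 1) := (fib_add_one (by omega)).symm
      _ ≤ fib (n + 1) := fib_mono (by simpa using hle a (mem_insert_self a s))

theorem sum_fib_lt_of_no_consecutive_general (n : ℕ) (S : Finset ℕ)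
    (hpos : ∀ i ∈ S, 1 ≤ i)
    (hnc : ∀ i ∈ S, i + 1 ∉ S)
    (hmax : ∀ i ∈ S, i ≤ n) :
    ∑ i ∈ S, F i < F (n + 1) := by
  have hshift : ∑ i ∈ S, F i = ∑ i ∈ S.map (addRightEmbedding 1), fib i := by
    simp [F]
  rw [hshift]
  refine sum_fib_lt_fib_succ_of_no_consecutive ?_ ?_ ?_ <;>
    simp only [mem_map, addRightEmbedding_apply, forall_exists_index, and_imp,
      forall_apply_eq_imp_iff₂]
  · exact fun i hi => Nat.succ_le_succ (hpos i hi)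
  · rintro i hi ⟨j, hj, hji⟩
    obtain rfl : j = i + 1 := by omega
    exact hnc i hi hj
  · exact fun i hi => Nat.succ_le_succ (hmax i hi)

/-- If `S` is a finite nonempty set of positive indices with no two consecutive
integers whose largest element is `n`, then `∑_{i ∈ S} F i < F (n+1)`. -/
theorem sum_fib_lt_of_no_consecutive (n : ℕ) (S : Finset ℕ)
    (hne : S.Nonempty)
    (hpos : ∀ i ∈ S, 1 ≤ i)
    (hnc : ∀ i ∈ S, i + 1 ∉ S)
    (hmem : n ∈ S) (hmax : ∀ i ∈ S, i ≤ n) :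
    ∑ i ∈ S, F i < F (n + 1) :=
  sum_fib_lt_of_no_consecutive_general n S hpos hnc hmax
end

section
/- For every n ≥ 1 and every k ≥ 0, the number of integers N ∈ [F_n, F_{n+1}) whose Zeckendorf decomposition has exactly k+1 summands equals the binomial coefficient C(n−1−k, k) (interpreted as 0 when k > n−1−k). -/
/-- A Zeckendorf decomposition of `N`: a finite set `S` of positive indices
containing no two consecutive integers with `N = ∑_{i ∈ S} F i`. -/
def IsZeckendorf (N : ℕ) (S : Finset ℕ) : Prop :=
  (∀ i ∈ S, 1 ≤ i) ∧ (∀ i ∈ S, i + 1 ∉ S) ∧ ∑ i ∈ S, F i = N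

lemma F_pos (n : ℕ) : 0 < F n := Nat.fib_pos.2 (Nat.succ_pos _)

lemma F_mono {a b : ℕ} (h : a ≤ b) : F a ≤ F b := Nat.fib_mono (by omega)

lemma F_add_two (m : ℕ) : F (m + 2) = F m + F (m + 1) := by
  show Nat.fib (m + 3) = Nat.fib (m + 1) + Nat.fib (m + 2)
  rw [show m + 3 = (m + 1) + 2 by ring, Nat.fib_add_two]

/-- Key bound: a consecutive-free set of indices `≥ 1` all bounded by `m`
has `F`-sum less than `F (m+1)`. -/
lemma sum_lt_F : ∀ m : ℕ, ∀ S : Finset ℕ, (∀ i ∈ S, 1 ≤ i) → (∀ i ∈ S, i + 1 ∉ S) →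
    (∀ i ∈ S, i ≤ m) → ∑ i ∈ S, F i < F (m + 1) := by
  intro m
  induction m using Nat.strong_induction_on with
  | _ m ih =>
    intro S h1 h2 h3
    rcases m with _ | _ | m
    · have hS : S = ∅ := Finset.eq_empty_of_forall_notMem fun i hi => by
        have := h1 i hi; have := h3 i hi; omega
      simp [hS]
      exact F_pos 1
    · have hS : S ⊆ {1} := fun i hi => by
        have := h1 i hi; have := h3 i hi
        simp only [Finset.mem_singleton]; omega
      calc ∑ i ∈ S, F i ≤ ∑ i ∈ ({1} : Finset ℕ), F i :=
            Finset.sum_le_sum_of_subset hS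
        _ = 1 := by decide
        _ < F 2 := by decide
    · show ∑ i ∈ S, F i < F (m + 3)
      by_cases hm : m + 2 ∈ S
      · have hsum : ∑ i ∈ S.erase (m + 2), F i + F (m + 2) = ∑ i ∈ S, F i :=
          Finset.sum_erase_add _ _ hm
        have herase : ∑ i ∈ S.erase (m + 2), F i < F (m + 1) := by
          apply ih m (by omega)
          · intro i hi; exact h1 i (Finset.erase_subset _ _ hi)
          · intro i hi hcon
            exact h2 i (Finset.erase_subset _ _ hi) (Finset.erase_subset _ _ hcon)
          · intro i hi
            obtain ⟨hne, hiS⟩ := Finset.mem_erase.1 hi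
            have hle := h3 i hiS
            have : i ≠ m + 1 := by
              rintro rfl
              exact h2 _ hiS hm
            omega
        have e : F (m + 3) = F (m + 1) + F (m + 2) := by
          have h := F_add_two (m + 1)
          rw [show m + 1 + 2 = m + 3 by omega, show m + 1 + 1 = m + 2 by omega] at h
          exact h
        omega
      · have : ∑ i ∈ S, F i < F (m + 2) := by
          apply ih (m + 1) (by omega) S h1 h2
          intro i hi
          have := h3 i hi
          have : i ≠ m + 2 := fun e => hm (e ▸ hi)
          omega
        exact lt_of_lt_of_le this (F_mono (by omega))

lemma zeck_bounds {S : Finset ℕ} (hne : S.Nonempty) (h1 : ∀ i ∈ S, 1 ≤ i)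
    (h2 : ∀ i ∈ S, i + 1 ∉ S) :
    F (S.max' hne) ≤ ∑ i ∈ S, F i ∧ ∑ i ∈ S, F i < F (S.max' hne + 1) := by
  constructor
  · exact Finset.single_le_sum (fun i _ => Nat.zero_le _) (S.max'_mem hne)
  · exact sum_lt_F _ S h1 h2 (fun i hi => S.le_max' i hi)

/-- Uniqueness of Zeckendorf decompositions. -/
lemma zeck_unique : ∀ N : ℕ, ∀ S T : Finset ℕ, (∀ i ∈ S, 1 ≤ i) → (∀ i ∈ S, i + 1 ∉ S) →
    (∀ i ∈ T, 1 ≤ i) → (∀ i ∈ T, i + 1 ∉ T) →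
    ∑ i ∈ S, F i = N → ∑ i ∈ T, F i = N → S = T := by
  intro N
  induction N using Nat.strong_induction_on with
  | _ N ih =>
    intro S T hS1 hS2 hT1 hT2 hSs hTs
    rcases eq_or_ne N 0 with rfl | hN
    · have hS : S = ∅ := Finset.eq_empty_of_forall_notMem fun i hi => by
        have := Finset.single_le_sum (f := F) (fun j _ => Nat.zero_le _) hi
        have := F_pos i; omega
      have hT : T = ∅ := Finset.eq_empty_of_forall_notMem fun i hi => by
        have := Finset.single_le_sum (f := F) (fun j _ => Nat.zero_le _) hi
        have := F_pos i; omega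
      rw [hS, hT]
    · have hSne : S.Nonempty := by
        rw [Finset.nonempty_iff_ne_empty]; rintro rfl; simp at hSs; omega
      have hTne : T.Nonempty := by
        rw [Finset.nonempty_iff_ne_empty]; rintro rfl; simp at hTs; omega
      obtain ⟨hSl, hSu⟩ := zeck_bounds hSne hS1 hS2
      obtain ⟨hTl, hTu⟩ := zeck_bounds hTne hT1 hT2
      set a := S.max' hSne with ha
      set b := T.max' hTne with hb
      have hab : a = b := by
        rcases lt_trichotomy a b with h | h | h
        · have := F_mono (show a + 1 ≤ b by omega); omega
        · exact h
        · have := F_mono (show b + 1 ≤ a by omega); omega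
      have haS : a ∈ S := S.max'_mem hSne
      have haT : a ∈ T := hab ▸ T.max'_mem hTne
      have hSsum : ∑ i ∈ S.erase a, F i + F a = N := by
        rw [Finset.sum_erase_add _ _ haS, hSs]
      have hTsum : ∑ i ∈ T.erase a, F i + F a = N := by
        rw [Finset.sum_erase_add _ _ haT, hTs]
      have hFa := F_pos a
      have heq : S.erase a = T.erase a := by
        apply ih (N - F a) (by omega)
        · intro i hi; exact hS1 i (Finset.erase_subset _ _ hi)
        · intro i hi hcon
          exact hS2 i (Finset.erase_subset _ _ hi) (Finset.erase_subset _ _ hcon)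
        · intro i hi; exact hT1 i (Finset.erase_subset _ _ hi)
        · intro i hi hcon
          exact hT2 i (Finset.erase_subset _ _ hi) (Finset.erase_subset _ _ hcon)
        · omega
        · omega
      have : insert a (S.erase a) = insert a (T.erase a) := by rw [heq]
      rwa [Finset.insert_erase haS, Finset.insert_erase haT] at this

/-- Consecutive-free `k`-subsets of `[1, m]`. -/
def ZS (m k : ℕ) : Finset (Finset ℕ) :=
  (Finset.Icc 1 m).powerset.filter (fun T => (∀ i ∈ T, i + 1 ∉ T) ∧ T.card = k)

lemma ZS_card : ∀ m k : ℕ, (ZS m k).card = Nat.choose (m + 1 - k) k := by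
  intro m
  induction m using Nat.strong_induction_on with
  | _ m ih =>
    intro k
    rcases k with _ | k
    · have : ZS m 0 = {∅} := by
        ext T
        simp only [ZS, Finset.mem_filter, Finset.mem_powerset, Finset.card_eq_zero,
          Finset.mem_singleton]
        constructor
        · rintro ⟨-, -, h⟩; exact h
        · rintro rfl; simp
      rw [this]; simp
    · rcases m with _ | _ | m
      · have : ZS 0 (k + 1) = ∅ := by
          ext T
          simp only [ZS, Finset.mem_filter, Finset.mem_powerset, Finset.notMem_empty,
            iff_false, not_and]
          intro hsub _
          have : T = ∅ := Finset.subset_empty.1 (by simpa using hsub)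
          simp [this]
        rw [this]
        simp [Nat.choose_eq_zero_of_lt]
      · rcases Nat.eq_zero_or_pos k with rfl | hk
        · have hz : ZS 1 1 = {({1} : Finset ℕ)} := by
            ext T
            simp only [ZS, Finset.mem_filter, Finset.mem_powerset, Finset.mem_singleton]
            constructor
            · rintro ⟨hsub, -, hcard⟩
              have hsub' : T ⊆ {1} := by simpa using hsub
              exact Finset.eq_of_subset_of_card_le hsub' (by simp [hcard])
            · rintro rfl
              exact ⟨by simp, by decide, rfl⟩
          rw [hz]
          rfl
        · have hz : ZS 1 (k + 1) = ∅ := by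
            ext T
            simp only [ZS, Finset.mem_filter, Finset.mem_powerset, Finset.notMem_empty,
              iff_false]
            rintro ⟨hsub, -, hcard⟩
            have hsub' : T ⊆ {1} := by simpa using hsub
            have := Finset.card_le_card hsub'
            simp only [Finset.card_singleton] at this
            omega
          rw [hz]
          simp only [Finset.card_empty]
          rw [show 1 + 1 - (k + 1) = 0 by omega, Nat.choose_eq_zero_of_lt (by omega)]
      · -- m + 2 case
        have hfil1 : (ZS (m + 2) (k + 1)).filter (fun T => ¬ (m + 2 ∈ T)) =
            ZS (m + 1) (k + 1) := by
          ext T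
          simp only [ZS, Finset.mem_filter, Finset.mem_powerset]
          constructor
          · rintro ⟨⟨hsub, hnc, hcard⟩, hnm⟩
            refine ⟨fun i hi => ?_, hnc, hcard⟩
            have h := Finset.mem_Icc.1 (hsub hi)
            have : i ≠ m + 2 := fun e => hnm (e ▸ hi)
            exact Finset.mem_Icc.2 ⟨h.1, by omega⟩
          · rintro ⟨hsub, hnc, hcard⟩
            refine ⟨⟨hsub.trans (Finset.Icc_subset_Icc_right (by omega)), hnc, hcard⟩,
              fun hm => ?_⟩
            have := (Finset.mem_Icc.1 (hsub hm)).2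
            omega
        have hfil2 : (ZS (m + 2) (k + 1)).filter (fun T => m + 2 ∈ T) =
            (ZS m k).image (insert (m + 2)) := by
          ext T
          simp only [ZS, Finset.mem_filter, Finset.mem_powerset, Finset.mem_image]
          constructor
          · rintro ⟨⟨hsub, hnc, hcard⟩, hm⟩
            refine ⟨T.erase (m + 2), ⟨?_, ?_, ?_⟩, Finset.insert_erase hm⟩
            · intro i hi
              obtain ⟨hne, hiT⟩ := Finset.mem_erase.1 hi
              have h := Finset.mem_Icc.1 (hsub hiT)
              have hne1 : i ≠ m + 1 := by rintro rfl; exact hnc _ hiT hm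
              exact Finset.mem_Icc.2 ⟨h.1, by omega⟩
            · intro i hi hcon
              exact hnc i (Finset.mem_erase.1 hi).2 (Finset.mem_erase.1 hcon).2
            · rw [Finset.card_erase_of_mem hm, hcard]; omega
          · rintro ⟨T', ⟨hsub, hnc, hcard⟩, rfl⟩
            have hnotin : m + 2 ∉ T' := fun h => by
              have := (Finset.mem_Icc.1 (hsub h)).2; omega
            refine ⟨⟨?_, ?_, ?_⟩, Finset.mem_insert_self _ _⟩
            · intro i hi
              rcases Finset.mem_insert.1 hi with rfl | hi'
              · exact Finset.mem_Icc.2 ⟨by omega, le_refl _⟩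
              · have := Finset.mem_Icc.1 (hsub hi')
                exact Finset.mem_Icc.2 ⟨this.1, by omega⟩
            · intro i hi hcon
              rcases Finset.mem_insert.1 hi with rfl | hi'
              · rcases Finset.mem_insert.1 hcon with h | h
                · omega
                · have := (Finset.mem_Icc.1 (hsub h)).2; omega
              · have hle := (Finset.mem_Icc.1 (hsub hi')).2
                rcases Finset.mem_insert.1 hcon with h | h
                · omega
                · exact hnc i hi' h
            · rw [Finset.card_insert_of_notMem hnotin, hcard]
        have hinj : Set.InjOn (insert (m + 2)) (↑(ZS m k) : Set (Finset ℕ)) := by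
          intro X hX Y hY h
          simp only [Finset.coe_filter, ZS, Set.mem_setOf_eq, Finset.mem_coe,
            Finset.mem_filter, Finset.mem_powerset] at hX hY
          have hXn : m + 2 ∉ X := fun hx => by
            have := (Finset.mem_Icc.1 (hX.1 hx)).2; omega
          have hYn : m + 2 ∉ Y := fun hy => by
            have := (Finset.mem_Icc.1 (hY.1 hy)).2; omega
          have : (insert (m + 2) X).erase (m + 2) = (insert (m + 2) Y).erase (m + 2) := by
            rw [h]
          rwa [Finset.erase_insert hXn, Finset.erase_insert hYn] at this
        have hcards : (ZS (m + 2) (k + 1)).card =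
            (ZS m k).card + (ZS (m + 1) (k + 1)).card := by
          rw [← Finset.card_filter_add_card_filter_not
            (s := ZS (m + 2) (k + 1)) (p := fun T => m + 2 ∈ T), hfil1, hfil2,
            Finset.card_image_of_injOn hinj]
        rw [hcards, ih m (by omega), ih (m + 1) (by omega)]
        rw [show m + 1 + 1 - (k + 1) = m + 1 - k by omega]
        by_cases hk : k ≤ m + 1
        · rw [show m + 2 + 1 - (k + 1) = (m + 1 - k) + 1 by omega, Nat.choose_succ_succ]
        · rw [show m + 2 + 1 - (k + 1) = 0 by omega, show m + 1 - k = 0 by omega]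
          rw [Nat.choose_eq_zero_of_lt (show (0:ℕ) < k + 1 by omega),
            Nat.choose_eq_zero_of_lt (show (0:ℕ) < k by omega)]

/-- Consecutive-free `k`-subsets of `[1, n]` containing `n`. -/
def ZB (n k : ℕ) : Finset (Finset ℕ) :=
  (Finset.Icc 1 n).powerset.filter (fun T => (∀ i ∈ T, i + 1 ∉ T) ∧ T.card = k ∧ n ∈ T)

lemma ZB_card (n k : ℕ) (hn : 1 ≤ n) :
    (ZB n (k + 1)).card = Nat.choose (n - 1 - k) k := by
  have h2 : ZB n (k + 1) = (ZS (n - 2) k).image (insert n) := by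
    ext T
    simp only [ZB, ZS, Finset.mem_filter, Finset.mem_powerset, Finset.mem_image]
    constructor
    · rintro ⟨hsub, hnc, hcard, hmem⟩
      refine ⟨T.erase n, ⟨?_, ?_, ?_⟩, Finset.insert_erase hmem⟩
      · intro i hi
        obtain ⟨hne, hiT⟩ := Finset.mem_erase.1 hi
        have h := Finset.mem_Icc.1 (hsub hiT)
        have hne1 : i ≠ n - 1 := by
          rintro rfl
          apply hnc _ hiT
          rwa [show n - 1 + 1 = n by omega]
        exact Finset.mem_Icc.2 ⟨h.1, by omega⟩
      · intro i hi hcon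
        exact hnc i (Finset.mem_erase.1 hi).2 (Finset.mem_erase.1 hcon).2
      · rw [Finset.card_erase_of_mem hmem, hcard]; omega
    · rintro ⟨T', ⟨hsub, hnc, hcard⟩, rfl⟩
      have hnotin : n ∉ T' := fun h => by
        have := (Finset.mem_Icc.1 (hsub h)).2; omega
      refine ⟨?_, ?_, ?_, Finset.mem_insert_self _ _⟩
      · intro i hi
        rcases Finset.mem_insert.1 hi with rfl | hi'
        · exact Finset.mem_Icc.2 ⟨by omega, le_refl _⟩
        · have := Finset.mem_Icc.1 (hsub hi')
          exact Finset.mem_Icc.2 ⟨this.1, by omega⟩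
      · intro i hi hcon
        rcases Finset.mem_insert.1 hi with rfl | hi'
        · rcases Finset.mem_insert.1 hcon with h | h
          · omega
          · have := (Finset.mem_Icc.1 (hsub h)).2; omega
        · obtain ⟨hge, hle⟩ := Finset.mem_Icc.1 (hsub hi')
          rcases Finset.mem_insert.1 hcon with h | h
          · omega
          · exact hnc i hi' h
      · rw [Finset.card_insert_of_notMem hnotin, hcard]
  have hinj : Set.InjOn (insert n) (↑(ZS (n - 2) k) : Set (Finset ℕ)) := by
    intro X hX Y hY h
    simp only [Finset.coe_filter, ZS, Set.mem_setOf_eq, Finset.mem_coe,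
      Finset.mem_filter, Finset.mem_powerset] at hX hY
    have hXn : n ∉ X := fun hx => by
      have := (Finset.mem_Icc.1 (hX.1 hx)).2; omega
    have hYn : n ∉ Y := fun hy => by
      have := (Finset.mem_Icc.1 (hY.1 hy)).2; omega
    have : (insert n X).erase n = (insert n Y).erase n := by rw [h]
    rwa [Finset.erase_insert hXn, Finset.erase_insert hYn] at this
  rw [h2, Finset.card_image_of_injOn hinj, ZS_card]
  by_cases h : 2 ≤ n
  · congr 1; omega
  · have hn1 : n = 1 := by omega
    subst hn1
    rcases k with _ | k
    · rfl
    · congr 1; omega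

/-- The number of integers `N ∈ [F n, F (n+1))` whose Zeckendorf decomposition
has exactly `k+1` summands equals `C(n-1-k, k)`. -/
theorem card_zeckendorf_summands (n k : ℕ) (hn : 1 ≤ n) :
    {N : ℕ | F n ≤ N ∧ N < F (n + 1) ∧
        ∃ S : Finset ℕ, IsZeckendorf N S ∧ S.card = k + 1}.ncard
      = Nat.choose (n - 1 - k) k := by
  have key : {N : ℕ | F n ≤ N ∧ N < F (n + 1) ∧
      ∃ S : Finset ℕ, IsZeckendorf N S ∧ S.card = k + 1} =
      (fun T : Finset ℕ => ∑ i ∈ T, F i) '' ↑(ZB n (k + 1)) := by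
    ext N
    simp only [Set.mem_setOf_eq, Set.mem_image, Finset.mem_coe]
    constructor
    · rintro ⟨hl, hr, S, ⟨hS1, hS2, hSsum⟩, hcard⟩
      refine ⟨S, ?_, hSsum⟩
      have hne : S.Nonempty := Finset.card_pos.mp (by omega)
      obtain ⟨hbl, hbu⟩ := zeck_bounds hne hS1 hS2
      rw [hSsum] at hbl hbu
      set a := S.max' hne with ha
      have haS : a ∈ S := S.max'_mem hne
      have ha1 : 1 ≤ a := hS1 _ haS
      have han : a = n := by
        rcases lt_trichotomy a n with h | h | h
        · have := F_mono (show a + 1 ≤ n by omega); omega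
        · exact h
        · have := F_mono (show n + 1 ≤ a by omega); omega
      simp only [ZB, Finset.mem_filter, Finset.mem_powerset]
      exact ⟨fun i hi => Finset.mem_Icc.2 ⟨hS1 i hi, han ▸ S.le_max' i hi⟩,
        hS2, hcard, han ▸ haS⟩
    · rintro ⟨T, hT, rfl⟩
      simp only [ZB, Finset.mem_filter, Finset.mem_powerset] at hT
      obtain ⟨hsub, hnc, hcard, hmem⟩ := hT
      have h1 : ∀ i ∈ T, 1 ≤ i := fun i hi => (Finset.mem_Icc.1 (hsub hi)).1
      refine ⟨Finset.single_le_sum (fun i _ => Nat.zero_le _) hmem,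
        sum_lt_F n T h1 hnc (fun i hi => (Finset.mem_Icc.1 (hsub hi)).2),
        T, ⟨h1, hnc, rfl⟩, hcard⟩
  rw [key]
  rw [Set.ncard_image_of_injOn, Set.ncard_coe_finset, ZB_card n k hn]
  intro S hS T hT h
  simp only [Finset.mem_coe, ZB, Finset.mem_filter, Finset.mem_powerset] at hS hT
  exact zeck_unique (∑ i ∈ S, F i) S T
    (fun i hi => (Finset.mem_Icc.1 (hS.1 hi)).1) hS.2.1
    (fun i hi => (Finset.mem_Icc.1 (hT.1 hi)).1) hT.2.1
    rfl h.symm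
end

section
/- Let E(n) = Σ_{k=0}^{n} k·C(n−1−k, k). Then for all n ≥ 3, E(n) + E(n−2) = (n−2)·F_{n−3}, where F_0 is interpreted as 1 (i.e., (n−2)·F_{n−3} = (n−2)·fib(n−2) in the convention fib(1) = fib(2) = 1). -/
/-- `E n = ∑_{k=0}^{n} k · C(n-1-k, k)`, where binomial coefficients
`C(a,b)` with `b > a` are `0`. -/
def E (n : ℕ) : ℕ := ∑ k ∈ Finset.range (n + 1), k * Nat.choose (n - 1 - k) k

lemma sum_choose_fib (n : ℕ) :
    ∑ j ∈ Finset.range n, Nat.choose (n - 1 - j) j = Nat.fib n := by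
  cases n with
  | zero => simp
  | succ m =>
    rw [Nat.fib_succ_eq_sum_choose,
      Finset.Nat.sum_antidiagonal_eq_sum_range_succ_mk]
    rw [← Finset.sum_range_reflect (fun i => Nat.choose i (m - i)) (m + 1)]
    apply Finset.sum_congr rfl
    intro j hj
    simp only [Finset.mem_range] at hj
    congr 1
    omega

lemma choose_zero_mul (n : ℕ) : n * Nat.choose 0 n = 0 := by
  cases n <;> simp

lemma E_rec (n : ℕ) : E (n + 2) = E (n + 1) + E n + Nat.fib n := by
  have h1 : E (n + 2) = ∑ j ∈ Finset.range n,
      (j + 1) * (Nat.choose (n - 1 - j) j + Nat.choose (n - 1 - j) (j + 1)) := by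
    unfold E
    rw [show n + 2 + 1 = (n + 2) + 1 from rfl, Finset.sum_range_succ,
      Finset.sum_range_succ]
    have e1 : n + 2 - 1 - (n + 2) = 0 := by omega
    have e2 : n + 2 - 1 - (n + 1) = 0 := by omega
    rw [e1, e2, choose_zero_mul, choose_zero_mul, add_zero, add_zero,
      Finset.sum_range_succ']
    simp only [zero_mul, add_zero]
    apply Finset.sum_congr rfl
    intro j hj
    simp only [Finset.mem_range] at hj
    have e3 : n + 2 - 1 - (j + 1) = (n - 1 - j) + 1 := by omega
    rw [e3, Nat.choose_succ_succ]
  have h2 : ∑ j ∈ Finset.range n, (j + 1) * Nat.choose (n - 1 - j) j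
      = E n + Nat.fib n := by
    unfold E
    rw [Finset.sum_range_succ]
    have e1 : n - 1 - n = 0 := by omega
    rw [e1, choose_zero_mul, add_zero]
    rw [← sum_choose_fib n, ← Finset.sum_add_distrib]
    apply Finset.sum_congr rfl
    intro j _
    ring
  have h3 : ∑ j ∈ Finset.range n, (j + 1) * Nat.choose (n - 1 - j) (j + 1)
      = E (n + 1) := by
    unfold E
    rw [show n + 1 + 1 = (n + 1) + 1 from rfl, Finset.sum_range_succ]
    have e1 : n + 1 - 1 - (n + 1) = 0 := by omega
    rw [e1, choose_zero_mul, add_zero, Finset.sum_range_succ']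
    simp only [zero_mul, add_zero]
    apply Finset.sum_congr rfl
    intro j hj
    simp only [Finset.mem_range] at hj
    congr 2
    omega
  calc E (n + 2) = ∑ j ∈ Finset.range n, (j + 1) * Nat.choose (n - 1 - j) j
        + ∑ j ∈ Finset.range n, (j + 1) * Nat.choose (n - 1 - j) (j + 1) := by
        rw [h1, ← Finset.sum_add_distrib]
        apply Finset.sum_congr rfl
        intro j _
        ring
    _ = E (n + 1) + E n + Nat.fib n := by rw [h2, h3]; ring

lemma aux : ∀ m : ℕ, E (m + 3) + E (m + 1) = (m + 1) * Nat.fib (m + 1) := by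
  intro m
  induction m using Nat.twoStepInduction with
  | zero => decide
  | one => decide
  | more m ih2 ih1 =>
    have r1 := E_rec (m + 3)
    have r2 := E_rec (m + 1)
    have hf : Nat.fib (m + 3) = Nat.fib (m + 1) + Nat.fib (m + 2) :=
      Nat.fib_add_two (n := m + 1)
    have h : E (m + 2 + 3) + E (m + 2 + 1)
        = (E (m + 1 + 3) + E (m + 1 + 1)) + (E (m + 3) + E (m + 1))
          + Nat.fib (m + 3) + Nat.fib (m + 1) := by
      show E (m + 5) + E (m + 3) = _
      rw [show m + 5 = (m + 3) + 2 from rfl, r1,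
        show m + 3 = (m + 1) + 2 from rfl, r2]
      ring
    rw [h, ih1, ih2, show m + 2 + 1 = m + 3 from rfl, hf,
      show m + 1 + 1 = m + 2 from rfl]
    ring

/-- For all `n ≥ 3`, `E n + E (n-2) = (n-2) · F_{n-3}` where
`F_{n-3} = fib (n-2)` in the convention `fib 1 = fib 2 = 1` (so `F_0 = fib 1 = 1`). -/
theorem E_add_E_sub_two (n : ℕ) (hn : 3 ≤ n) :
    E n + E (n - 2) = (n - 2) * Nat.fib (n - 2) := by
  obtain ⟨m, rfl⟩ : ∃ m, n = m + 3 := ⟨n - 3, by omega⟩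
  have h1 : m + 3 - 2 = m + 1 := by omega
  rw [h1]
  exact aux m
end

section
/- For all n ≥ 2 and all k ≥ 0, the counts p_{n,k} satisfy the recurrence p_{n+1,k+1} = p_{n,k+1} + p_{n−1,k}. -/
/-- `p n k` is the number of integers `N ∈ [F n, F (n+1))` whose Zeckendorf
decomposition has exactly `k` summands. -/
noncomputable def p (n k : ℕ) : ℕ :=
  {N : ℕ | F n ≤ N ∧ N < F (n + 1) ∧
    ∃ S : Finset ℕ, IsZeckendorf N S ∧ S.card = k}.ncard

lemma F_mono_s9 : Monotone F := fun a b h => Nat.fib_mono (by omega)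

lemma F_add (n : ℕ) : F (n + 2) = F (n + 1) + F n := by
  show Nat.fib (n + 3) = Nat.fib (n + 2) + Nat.fib (n + 1)
  have h := Nat.fib_add_two (n := n + 1)
  simp only [show n + 1 + 2 = n + 3 from rfl, show n + 1 + 1 = n + 2 from rfl] at h
  omega

lemma sum_lt (m : ℕ) : ∀ S : Finset ℕ, (∀ i ∈ S, 1 ≤ i) → (∀ i ∈ S, i + 1 ∉ S) →
    (∀ i ∈ S, i ≤ m) → ∑ i ∈ S, F i < F (m + 1) := by
  induction m using Nat.strong_induction_on with
  | _ m ih =>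
    intro S h1 h2 hb
    by_cases hm : m ∈ S
    · have hm1 : 1 ≤ m := h1 m hm
      rcases Nat.lt_or_ge m 2 with hm2 | hm2
      · have hmeq : m = 1 := by omega
        subst hmeq
        have hS : S ⊆ {1} := fun i hi => by
          simp only [Finset.mem_singleton]
          have := h1 i hi; have := hb i hi; omega
        have hle : ∑ i ∈ S, F i ≤ ∑ i ∈ ({1} : Finset ℕ), F i :=
          Finset.sum_le_sum_of_subset hS
        have h1' : ∑ i ∈ ({1} : Finset ℕ), F i = 1 := by decide
        have h2' : F (1+1) = 2 := by decide
        omega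
      have hsum : ∑ i ∈ S, F i = F m + ∑ i ∈ S.erase m, F i :=
        (Finset.add_sum_erase _ _ hm).symm
      have hb' : ∀ i ∈ S.erase m, i + 2 ≤ m := by
        intro i hi
        have hiS := Finset.mem_of_mem_erase hi
        have h4 := hb i hiS
        have h5 : i ≠ m := Finset.ne_of_mem_erase hi
        have h6 : i + 1 ≠ m := by
          rintro rfl
          exact h2 i hiS hm
        omega
      have hrec := ih (m - 2) (by omega) (S.erase m)
        (fun i hi => h1 i (Finset.mem_of_mem_erase hi))
        (fun i hi hc => h2 i (Finset.mem_of_mem_erase hi) (Finset.mem_of_mem_erase hc))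
        (fun i hi => by have := hb' i hi; omega)
      have hadd := F_add (m - 1)
      rw [show m - 1 + 2 = m + 1 by omega, show m - 1 + 1 = m by omega] at hadd
      rw [show m - 2 + 1 = m - 1 by omega] at hrec
      omega
    · rcases Nat.eq_zero_or_pos m with rfl | hm1
      · have hS : S = ∅ := Finset.eq_empty_of_forall_notMem
          (fun i hi => by have := h1 i hi; have := hb i hi; omega)
        rw [hS]
        simpa using F_pos 1
      · have hrec := ih (m - 1) (by omega) S h1 h2
          (fun i hi => by have := hb i hi; have : i ≠ m := fun h => hm (h ▸ hi); omega)
        have : m - 1 + 1 = m := by omega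
        rw [this] at hrec
        have := F_mono_s9 (show m ≤ m + 1 by omega)
        omega

lemma zeck_top {N : ℕ} {S : Finset ℕ} {m : ℕ} (hZ : IsZeckendorf N S)
    (hl : F m ≤ N) (hu : N < F (m + 1)) : m ∈ S ∧ ∀ i ∈ S, i ≤ m := by
  obtain ⟨h1, h2, h3⟩ := hZ
  have hb : ∀ i ∈ S, i ≤ m := by
    intro i hi
    by_contra hc
    have h4 : F (m + 1) ≤ F i := F_mono_s9 (by omega)
    have h5 : F i ≤ N := h3 ▸ Finset.single_le_sum (f := F) (fun _ _ => Nat.zero_le _) hi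
    omega
  refine ⟨?_, hb⟩
  by_contra hm
  rcases Nat.eq_zero_or_pos m with rfl | hm1
  · have hS : S = ∅ := Finset.eq_empty_of_forall_notMem
      (fun i hi => by have := h1 i hi; have := hb i hi; omega)
    rw [hS] at h3
    simp at h3
    have := F_pos 0
    omega
  · have hrec := sum_lt (m - 1) S h1 h2
      (fun i hi => by have := hb i hi; have : i ≠ m := fun h => hm (h ▸ hi); omega)
    have : m - 1 + 1 = m := by omega
    rw [this] at hrec
    omega

lemma zeck_insert {M : ℕ} {S : Finset ℕ} {m : ℕ} (hZ : IsZeckendorf M S) (hm : 1 ≤ m)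
    (hb : ∀ i ∈ S, i + 2 ≤ m) : IsZeckendorf (M + F m) (insert m S) := by
  obtain ⟨h1, h2, h3⟩ := hZ
  have hns : m ∉ S := fun h => by have := hb m h; omega
  refine ⟨?_, ?_, ?_⟩
  · intro i hi
    rcases Finset.mem_insert.1 hi with rfl | hi
    · exact hm
    · exact h1 i hi
  · intro i hi hc
    rcases Finset.mem_insert.1 hi with rfl | hi
    · rcases Finset.mem_insert.1 hc with h | h
      · omega
      · have := hb _ h; omega
    · rcases Finset.mem_insert.1 hc with h | h
      · have := hb i hi; omega
      · exact h2 i hi h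
  · rw [Finset.sum_insert hns, h3]; omega

/-- The recurrence `p_{n+1,k+1} = p_{n,k+1} + p_{n-1,k}` for all `n ≥ 2`, `k ≥ 0`. -/
theorem p_recurrence (n : ℕ) (hn : 2 ≤ n) (k : ℕ) :
    p (n + 1) (k + 1) = p n (k + 1) + p (n - 1) k := by
  obtain ⟨m, rfl⟩ : ∃ m, n = m + 2 := ⟨n - 2, by omega⟩
  show p (m + 3) (k + 1) = p (m + 2) (k + 1) + p (m + 1) k
  have key : {N : ℕ | F (m+3) ≤ N ∧ N < F (m+3+1) ∧ ∃ S, IsZeckendorf N S ∧ S.card = k+1}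
      = ((· + F (m+1)) '' {N : ℕ | F (m+2) ≤ N ∧ N < F (m+2+1) ∧
          ∃ S, IsZeckendorf N S ∧ S.card = k+1})
      ∪ ((· + F (m+3)) '' {N : ℕ | F (m+1) ≤ N ∧ N < F (m+1+1) ∧
          ∃ S, IsZeckendorf N S ∧ S.card = k}) := by
    ext N
    simp only [Set.mem_setOf_eq, Set.mem_union, Set.mem_image]
    have eA : F (m+1+1) = F (m+2) := congrArg F (by omega)
    have eB : F (m+2+1) = F (m+3) := congrArg F (by omega)
    have eC : F (m+3+1) = F (m+4) := congrArg F (by omega)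
    have hF3 : F (m+3) = F (m+2) + F (m+1) := F_add (m+1)
    have hF4 : F (m+4) = F (m+3) + F (m+2) := by
      have h := F_add (m+2)
      rw [show m+2+2 = m+4 by omega] at h
      exact h
    constructor
    · rintro ⟨hl, hu, S, hZ, hcard⟩
      obtain ⟨hmem, hbt⟩ := zeck_top hZ hl hu
      obtain ⟨h1, h2, h3⟩ := hZ
      have hNM : F (m+3) + ∑ i ∈ S.erase (m+3), F i = N := by
        rw [← h3, Finset.add_sum_erase _ _ hmem]
      obtain ⟨M, hMdef⟩ : ∃ M, ∑ i ∈ S.erase (m+3), F i = M := ⟨_, rfl⟩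
      rw [hMdef] at hNM
      have hb' : ∀ i ∈ S.erase (m+3), i ≤ m + 1 := by
        intro i hi
        have hiS := Finset.mem_of_mem_erase hi
        have h4 := hbt i hiS
        have h5 : i ≠ m+3 := Finset.ne_of_mem_erase hi
        have h6 : i ≠ m+2 := by rintro rfl; exact h2 _ hiS hmem
        omega
      have h1' : ∀ i ∈ S.erase (m+3), 1 ≤ i := fun i hi => h1 i (Finset.mem_of_mem_erase hi)
      have h2' : ∀ i ∈ S.erase (m+3), i + 1 ∉ S.erase (m+3) := fun i hi hc =>
        h2 i (Finset.mem_of_mem_erase hi) (Finset.mem_of_mem_erase hc)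
      have hMlt : M < F (m+2) := hMdef ▸ sum_lt (m+1) _ h1' h2' hb'
      have hcard' : (S.erase (m+3)).card = k := by
        rw [Finset.card_erase_of_mem hmem, hcard]
        omega
      by_cases hc : F (m+1) ≤ M
      · right
        exact ⟨M, ⟨hc, hMlt, _, ⟨h1', h2', hMdef⟩, hcard'⟩, by omega⟩
      · left
        push_neg at hc
        have hb'' : ∀ i ∈ S.erase (m+3), i + 2 ≤ m + 2 := by
          intro i hi
          have h4 := hb' i hi
          have h5 : i ≠ m + 1 := by
            rintro rfl
            exact absurd (Finset.single_le_sum (f := F) (fun i _ => Nat.zero_le _) hi) (by omega)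
          omega
        refine ⟨M + F (m+2), ⟨Nat.le_add_left _ _, by omega,
          insert (m+2) (S.erase (m+3)), hMdef ▸ zeck_insert ⟨h1', h2', rfl⟩ (by omega) hb'', ?_⟩, by omega⟩
        rw [Finset.card_insert_of_notMem (fun h => by have := hb'' _ h; omega), hcard']
    · rintro (⟨M, ⟨hl, hu, T, hZ, hcard⟩, rfl⟩ | ⟨M, ⟨hl, hu, T, hZ, hcard⟩, rfl⟩)
      · obtain ⟨hmem, hbt⟩ := zeck_top hZ hl hu
        obtain ⟨h1, h2, h3⟩ := hZ
        have hsum : F (m+2) + ∑ i ∈ T.erase (m+2), F i = M := by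
          rw [← h3, Finset.add_sum_erase _ _ hmem]
        have hb' : ∀ i ∈ T.erase (m+2), i + 2 ≤ m + 3 := by
          intro i hi
          have hiS := Finset.mem_of_mem_erase hi
          have h4 := hbt i hiS
          have h5 : i ≠ m+2 := Finset.ne_of_mem_erase hi
          have h6 : i ≠ m+1 := by rintro rfl; exact h2 _ hiS hmem
          omega
        have hZ' := zeck_insert (M := ∑ i ∈ T.erase (m+2), F i) (S := T.erase (m+2)) (m := m+3)
          ⟨fun i hi => h1 i (Finset.mem_of_mem_erase hi),
           fun i hi hc => h2 i (Finset.mem_of_mem_erase hi) (Finset.mem_of_mem_erase hc), rfl⟩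
          (by omega) hb'
        have heq : (∑ i ∈ T.erase (m+2), F i) + F (m+3) = M + F (m+1) := by omega
        rw [heq] at hZ'
        have hF12 : F (m+1) ≤ F (m+2) := F_mono_s9 (by omega)
        refine ⟨by omega, by omega, insert (m+3) (T.erase (m+2)), hZ', ?_⟩
        rw [Finset.card_insert_of_notMem (fun h => by have := hb' _ h; omega),
          Finset.card_erase_of_mem hmem, hcard]
        omega
      · obtain ⟨_, hbt⟩ := zeck_top hZ hl hu
        have hb' : ∀ i ∈ T, i + 2 ≤ m + 3 := fun i hi => by have := hbt i hi; omega
        have hZ' := zeck_insert hZ (m := m+3) (by omega) hb'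
        refine ⟨by omega, by omega, insert (m+3) T, hZ', ?_⟩
        rw [Finset.card_insert_of_notMem (fun h => by have := hb' _ h; omega), hcard]
  have hfinB : {N : ℕ | F (m+2) ≤ N ∧ N < F (m+2+1) ∧
      ∃ S, IsZeckendorf N S ∧ S.card = k+1}.Finite :=
    (Set.finite_Ico (F (m+2)) (F (m+3))).subset (fun x hx => Set.mem_Ico.2 ⟨hx.1, hx.2.1⟩)
  have hfinC : {N : ℕ | F (m+1) ≤ N ∧ N < F (m+1+1) ∧
      ∃ S, IsZeckendorf N S ∧ S.card = k}.Finite :=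
    (Set.finite_Ico (F (m+1)) (F (m+2))).subset (fun x hx => Set.mem_Ico.2 ⟨hx.1, hx.2.1⟩)
  have hdisj : Disjoint
      ((· + F (m+1)) '' {N : ℕ | F (m+2) ≤ N ∧ N < F (m+2+1) ∧
          ∃ S, IsZeckendorf N S ∧ S.card = k+1})
      ((· + F (m+3)) '' {N : ℕ | F (m+1) ≤ N ∧ N < F (m+1+1) ∧
          ∃ S, IsZeckendorf N S ∧ S.card = k}) := by
    rw [Set.disjoint_left]
    rintro x ⟨M1, hM1, rfl⟩ ⟨M2, hM2, hx⟩
    simp only [Set.mem_setOf_eq] at hM1 hM2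
    have eB : F (m+2+1) = F (m+3) := congrArg F (by omega)
    have hF3 : F (m+3) = F (m+2) + F (m+1) := F_add (m+1)
    have := hM1.2.1
    have := hM2.1
    simp only at hx
    omega
  unfold p
  rw [key, Set.ncard_union_eq hdisj (hfinB.image _) (hfinC.image _),
    Set.ncard_image_of_injective _ (add_left_injective _),
    Set.ncard_image_of_injective _ (add_left_injective _)]
end

section
/- For every n ≥ 1, S_{n−1} = F_n − S_{n−3} − 1; equivalently, S_{n−1} + S_{n−3} + 1 = F_n. -/
/-- `S n = F n + F (n-4) + F (n-8) + ⋯` (the sum of `F (n - 4i)` over `i ≥ 0`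
with `n - 4i > 0`) for `n > 0`, and `S n = 0` for `n ≤ 0`. -/
def S (n : ℕ) : ℕ := ∑ i ∈ Finset.range ((n + 3) / 4), F (n - 4 * i)

lemma S_shift (m : ℕ) : S (m + 4) = F (m + 4) + S m := by
  have h : (m + 4 + 3) / 4 = (m + 3) / 4 + 1 := by omega
  rw [S, h, Finset.sum_range_succ']
  have h2 : ∀ i, m + 4 - 4 * (i + 1) = m - 4 * i := by intro i; omega
  simp only [h2, Nat.mul_zero, Nat.sub_zero]
  rw [S, Nat.add_comm]

lemma F_rec (m : ℕ) : F (m + 7) = F (m + 6) + F (m + 4) + F (m + 3) := by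
  simp only [F]
  have a : Nat.fib (m + 8) = Nat.fib (m + 6) + Nat.fib (m + 7) := by
    rw [show m + 8 = m + 6 + 2 from rfl, Nat.fib_add_two]
  have b : Nat.fib (m + 6) = Nat.fib (m + 4) + Nat.fib (m + 5) := by
    rw [show m + 6 = m + 4 + 2 from rfl, Nat.fib_add_two]
  show Nat.fib (m + 8) = Nat.fib (m + 7) + Nat.fib (m + 5) + Nat.fib (m + 4)
  omega

/-- For every `n ≥ 1`, `S (n-1) + S (n-3) + 1 = F n`
(equivalently `S (n-1) = F n − S (n-3) − 1`). -/
theorem S_identity (n : ℕ) (hn : 1 ≤ n) :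
    S (n - 1) + S (n - 3) + 1 = F n := by
  induction n using Nat.strong_induction_on with
  | _ n ih =>
    match n, hn with
    | 1, _ => decide
    | 2, _ => decide
    | 3, _ => decide
    | 4, _ => decide
    | 5, _ => decide
    | 6, _ => decide
    | (m + 7), _ =>
      have ihm := ih (m + 3) (by omega) (by omega)
      have e1 : m + 7 - 1 = (m + 2) + 4 := by omega
      have e2 : m + 7 - 3 = m + 4 := by omega
      have e3 : m + 3 - 1 = m + 2 := by omega
      have e4 : m + 3 - 3 = m := by omega
      rw [e1, e2, S_shift, S_shift, F_rec]
      rw [e3, e4] at ihm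
      have e5 : m + 2 + 4 = m + 6 := by omega
      rw [e5]
      omega
end
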